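/- Let (a_n) be a sequence of positive reals and p : ℕ → ℕ a nondecreasing sequence tending to infinity, such that a_n · exp(u · p(n)) → 0 for every u ≥ 0. Let (Y_n) be a sequence of random variables with sup_n E[Y_n²] < ∞. Then E[log(1 + a_n · exp(p(n) · Y_n))] / p(n) → 0 as n → ∞. -/

import Mathlib

/-!
Split at a threshold `u > 0`: where `Y ≤ u` the integrand is at most `a e^{u p}`, and where
`Y > u` it is at most `log (1 + a) + p Y ≤ a + p Y² / u`. Taking expectations and dividing by
`p` bounds the ratio by `(a e^{u p} + a) / p + M / u`, whose first term tends to zero for each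
fixed `u`; then let `u → ∞`.
-/

open MeasureTheory Filter Topology Real

lemma log_one_add_mul_exp_nonneg {a : ℝ} (ha : 0 ≤ a) (x : ℝ) :
    0 ≤ log (1 + a * exp x) :=
  log_nonneg (le_add_of_nonneg_right (by positivity))

lemma log_one_add_mul_exp_le {a u c : ℝ} (ha : 0 ≤ a) (hu : 0 < u) (hc : 0 ≤ c) (t : ℝ) :
    log (1 + a * exp (c * t)) ≤ a * exp (u * c) + a + c * t ^ 2 / u := by
  rcases le_or_gt t u with htu | hut
  · have hexp : a * exp (c * t) ≤ a * exp (u * c) := by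
      rw [mul_comm u c]; gcongr
    have : log (1 + a * exp (c * t)) ≤ a * exp (c * t) := by
      linarith [log_le_sub_one_of_pos (x := 1 + a * exp (c * t)) (by positivity)]
    have : 0 ≤ c * t ^ 2 / u := by positivity
    linarith
  · have hsplit : log (1 + a * exp (c * t)) ≤ log (1 + a) + c * t := by
      rw [← log_exp (c * t), ← log_mul (by positivity) (exp_ne_zero _), log_exp]
      gcongr
      nlinarith [one_le_exp (mul_nonneg hc (hu.trans hut).le)]
    have hlog : log (1 + a) ≤ a := by
      linarith [log_le_sub_one_of_pos (x := 1 + a) (by positivity)]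
    have hlin : c * t ≤ c * t ^ 2 / u := by
      rw [le_div_iff₀ hu]
      nlinarith [mul_nonneg hc (mul_nonneg (hu.trans hut).le (sub_nonneg.2 hut.le))]
    have : 0 ≤ a * exp (u * c) := by positivity
    linarith

lemma integral_log_one_add_mul_exp_le {Ω : Type*} [MeasurableSpace Ω] {μ : Measure Ω}
    [IsProbabilityMeasure μ] {a u c : ℝ} {Y : Ω → ℝ} (ha : 0 ≤ a) (hu : 0 < u) (hc : 0 ≤ c)
    (hY : Integrable (fun ω => Y ω ^ 2) μ) :
    ∫ ω, log (1 + a * exp (c * Y ω)) ∂μ ≤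
      a * exp (u * c) + a + c * (∫ ω, Y ω ^ 2 ∂μ) / u := by
  have hbound : Integrable (fun ω => a * exp (u * c) + a + c * Y ω ^ 2 / u) μ :=
    (integrable_const _).add ((hY.const_mul c).div_const u)
  calc ∫ ω, log (1 + a * exp (c * Y ω)) ∂μ
      ≤ ∫ ω, (a * exp (u * c) + a + c * Y ω ^ 2 / u) ∂μ :=
        integral_mono_of_nonneg (ae_of_all _ fun ω => log_one_add_mul_exp_nonneg ha _) hbound
          (ae_of_all _ fun ω => log_one_add_mul_exp_le ha hu hc (Y ω))
    _ = a * exp (u * c) + a + c * (∫ ω, Y ω ^ 2 ∂μ) / u := by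
        rw [integral_add (integrable_const _) ((hY.const_mul c).div_const u), integral_const,
          integral_div, integral_const_mul, probReal_univ, one_smul]

lemma tendsto_nhds_zero_of_nonneg_of_le_add_div {α : Type*} {l : Filter α} {f : α → ℝ}
    {g : ℝ → α → ℝ} {M : ℝ} (hf : ∀ n, 0 ≤ f n) (hg : ∀ u, 0 < u → Tendsto (g u) l (𝓝 0))
    (hle : ∀ u, 0 < u → ∀ᶠ n in l, f n ≤ g u n + M / u) :
    Tendsto f l (𝓝 0) := by
  refine tendsto_order.2 ⟨fun ε hε => Eventually.of_forall fun n => hε.trans_le (hf n),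
    fun ε hε => ?_⟩
  obtain ⟨u, hu, hMu⟩ := ((eventually_gt_atTop 0).and
    (((tendsto_const_nhds (x := M)).div_atTop tendsto_id).eventually (gt_mem_nhds hε))).exists
  rw [id] at hMu
  filter_upwards [hle u hu, (hg u hu).eventually (gt_mem_nhds (sub_pos.2 hMu))] with n h1 h2
  linarith

theorem e_log_lemma_general
    {Ω : Type*} [MeasurableSpace Ω] (μ : Measure Ω) [IsProbabilityMeasure μ]
    (a : ℕ → ℝ) (ha : ∀ n, 0 < a n)
    (p : ℕ → ℕ) (hp_top : Tendsto (fun n => (p n : ℝ)) atTop atTop)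
    (ha_dom : ∀ u : ℝ, 0 ≤ u →
      Tendsto (fun n => a n * Real.exp (u * p n)) atTop (nhds 0))
    (Y : ℕ → Ω → ℝ)
    (hYint : ∀ n, Integrable (fun ω => (Y n ω) ^ 2) μ)
    (M : ℝ) (hM : ∀ n, ∫ ω, (Y n ω) ^ 2 ∂μ ≤ M) :
    Tendsto
      (fun n => (∫ ω, Real.log (1 + a n * Real.exp ((p n : ℝ) * Y n ω)) ∂μ) / (p n : ℝ))
      atTop (nhds 0) := by
  have ha_zero : Tendsto a atTop (𝓝 0) := by simpa using ha_dom 0 le_rfl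
  refine tendsto_nhds_zero_of_nonneg_of_le_add_div (M := M)
    (g := fun u n => (a n * exp (u * p n) + a n) / p n)
    (fun n => div_nonneg (integral_nonneg fun ω => log_one_add_mul_exp_nonneg (ha n).le _)
      (Nat.cast_nonneg _))
    (fun u hu => by simpa using ((ha_dom u hu.le).add ha_zero).div_atTop hp_top)
    (fun u hu => ?_)
  filter_upwards [hp_top.eventually_gt_atTop 0] with n hpn
  rw [div_le_iff₀ hpn]
  calc ∫ ω, log (1 + a n * exp (p n * Y n ω)) ∂μ
      ≤ a n * exp (u * p n) + a n + p n * (∫ ω, Y n ω ^ 2 ∂μ) / u :=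
        integral_log_one_add_mul_exp_le (ha n).le hu (Nat.cast_nonneg _) (hYint n)
    _ ≤ a n * exp (u * p n) + a n + p n * M / u := by gcongr; exact hM n
    _ = ((a n * exp (u * p n) + a n) / p n + M / u) * p n := by field_simp

theorem e_log_lemma
    {Ω : Type*} [MeasurableSpace Ω] (μ : Measure Ω) [IsProbabilityMeasure μ]
    (a : ℕ → ℝ) (ha : ∀ n, 0 < a n)
    (p : ℕ → ℕ) (hp_mono : Monotone p) (hp_top : Tendsto (fun n => (p n : ℝ)) atTop atTop)
    (ha_dom : ∀ u : ℝ, 0 ≤ u →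
      Tendsto (fun n => a n * Real.exp (u * p n)) atTop (nhds 0))
    (Y : ℕ → Ω → ℝ) (hY : ∀ n, Measurable (Y n))
    (hYint : ∀ n, Integrable (fun ω => (Y n ω) ^ 2) μ)
    (M : ℝ) (hM : ∀ n, ∫ ω, (Y n ω) ^ 2 ∂μ ≤ M) :
    Tendsto
      (fun n => (∫ ω, Real.log (1 + a n * Real.exp ((p n : ℝ) * Y n ω)) ∂μ) / (p n : ℝ))
      atTop (nhds 0) :=
  e_log_lemma_general μ a ha p hp_top ha_dom Y hYint M hM
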